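/- Let ψ₁(x) = (x−1)/(x+1). Then 0.96 < ψ₁(x)/((log x)/2) ≤ 1 for all x ∈ [1/2,2] with x ≠ 1, and 0.86 < ψ₁(x)/((log x)/2) ≤ 1 for all x ∈ [1/4,4] with x ≠ 1. -/

import Mathlib

/-!
With `t = ψ₁(x)` one has `log x = log (1 + t) - log (1 - t) = 2 (t + t³/3 + t⁵/5 + ⋯)`, so the
quotient `t / (log x / 2)` is at most `1` for `x > 1`. It is invariant under `x ↦ x⁻¹`, and
decreasing in `x > 1` because its derivative has the sign of
`2 x log x - (x² - 1) = 2x (log x - sinh (log x)) ≤ 0`.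
Hence on `[B⁻¹, B]` it is bounded below by its value at `B`, which is `2 / (3 log 2) > 0.96`
for `B = 2` and `3 / (5 log 2) > 0.86` for `B = 4`.
-/

open Real Set

noncomputable def psi1 (x : ℝ) : ℝ := (x - 1) / (x + 1)

noncomputable def psi1DivHalfLog (x : ℝ) : ℝ := psi1 x / (log x / 2)

lemma psi1_inv {x : ℝ} (hx : x ≠ 0) : psi1 x⁻¹ = -psi1 x := by
  rw [psi1, psi1, ← neg_div, neg_sub, show x⁻¹ - 1 = (1 - x) * x⁻¹ by field_simp,
    show x⁻¹ + 1 = (x + 1) * x⁻¹ by field_simp; ring, mul_div_mul_right _ _ (inv_ne_zero hx)]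

lemma psi1DivHalfLog_inv (x : ℝ) : psi1DivHalfLog x⁻¹ = psi1DivHalfLog x := by
  rcases eq_or_ne x 0 with rfl | hx
  · rw [inv_zero]
  · rw [psi1DivHalfLog, psi1DivHalfLog, psi1_inv hx, log_inv, neg_div, neg_div, div_neg, neg_neg]

lemma hasDerivAt_psi1 {x : ℝ} (hx : x + 1 ≠ 0) : HasDerivAt psi1 (2 / (x + 1) ^ 2) x :=
  (((hasDerivAt_id' x).sub_const 1).div ((hasDerivAt_id' x).add_const 1) hx).congr_deriv
    (by ring)

lemma log_one_add_psi1_sub_log_one_sub_psi1 {x : ℝ} (hx : 0 < x) :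
    log (1 + psi1 x) - log (1 - psi1 x) = log x := by
  have h1 : 1 + psi1 x = 2 * x / (x + 1) := by unfold psi1; field_simp; ring
  have h2 : 1 - psi1 x = 2 / (x + 1) := by unfold psi1; field_simp; ring
  rw [h1, h2, ← log_div (by positivity) (by positivity)]
  congr 1; field_simp

lemma two_mul_psi1_le_log {x : ℝ} (hx : 1 ≤ x) : 2 * psi1 x ≤ log x := by
  have hψ : 0 ≤ psi1 x := div_nonneg (by linarith) (by linarith)
  have hψ1 : |psi1 x| < 1 := by
    rw [abs_of_nonneg hψ, psi1, div_lt_one (by linarith)]; linarith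
  rw [← log_one_add_psi1_sub_log_one_sub_psi1 (by linarith)]
  simpa using le_hasSum (hasSum_log_sub_log_of_abs_lt_one hψ1) 0
    fun k _ => by positivity

lemma psi1DivHalfLog_le_one {x : ℝ} (hx : 1 < x) : psi1DivHalfLog x ≤ 1 := by
  rw [psi1DivHalfLog, div_le_one (by linarith [log_pos hx])]
  linarith [two_mul_psi1_le_log hx.le]

lemma two_mul_mul_log_le_sq_sub_one {x : ℝ} (hx : 1 ≤ x) : 2 * x * log x ≤ x ^ 2 - 1 := by
  have h : log x ≤ (x - x⁻¹) / 2 := by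
    rw [← sinh_log (by linarith)]
    exact self_le_sinh_iff.2 (log_nonneg hx)
  have hx0 : 0 < x := by linarith
  calc 2 * x * log x ≤ 2 * x * ((x - x⁻¹) / 2) := by gcongr
    _ = x ^ 2 - 1 := by field_simp

lemma hasDerivAt_psi1DivHalfLog {x : ℝ} (hx : 1 < x) :
    HasDerivAt psi1DivHalfLog
      (2 * (2 * x * log x - (x ^ 2 - 1)) / (x * (x + 1) ^ 2 * (log x) ^ 2)) x := by
  have hlog : log x ≠ 0 := (log_pos hx).ne'
  refine ((hasDerivAt_psi1 (by linarith)).div ((hasDerivAt_log (by linarith)).div_const 2)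
    (by simpa using hlog)).congr_deriv ?_
  rw [psi1]
  field_simp
  ring

lemma antitoneOn_psi1DivHalfLog : AntitoneOn psi1DivHalfLog (Ioi 1) := by
  refine antitoneOn_of_hasDerivWithinAt_nonpos (convex_Ioi 1)
    (fun x hx => (hasDerivAt_psi1DivHalfLog hx).continuousAt.continuousWithinAt)
    (fun x hx => (hasDerivAt_psi1DivHalfLog (interior_subset hx)).hasDerivWithinAt)
    fun x hx => ?_
  have hx : 1 < x := interior_subset hx
  exact div_nonpos_of_nonpos_of_nonneg (by linarith [two_mul_mul_log_le_sq_sub_one hx.le])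
    (by positivity)

lemma psi1DivHalfLog_bounds {B x : ℝ} (hB : 0 < B) (hx : x ∈ Icc B⁻¹ B) (hx1 : x ≠ 1) :
    psi1DivHalfLog B ≤ psi1DivHalfLog x ∧ psi1DivHalfLog x ≤ 1 := by
  have of_one_lt {y : ℝ} (hy : 1 < y) (hyB : y ≤ B) :
      psi1DivHalfLog B ≤ psi1DivHalfLog y ∧ psi1DivHalfLog y ≤ 1 :=
    ⟨antitoneOn_psi1DivHalfLog hy (hy.trans_le hyB) hyB, psi1DivHalfLog_le_one hy⟩
  rcases hx1.lt_or_gt with hlt | hgt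
  · have hx0 : 0 < x := (inv_pos.2 hB).trans_le hx.1
    rw [← psi1DivHalfLog_inv x]
    exact of_one_lt ((one_lt_inv₀ hx0).2 hlt) ((inv_le_comm₀ hx0 hB).2 hx.1)
  · exact of_one_lt hgt hx.2

lemma lt_psi1DivHalfLog_two : 0.96 < psi1DivHalfLog 2 := by
  rw [psi1DivHalfLog, psi1, lt_div_iff₀ (by positivity)]
  linarith [log_two_lt_d9]

lemma lt_psi1DivHalfLog_four : 0.86 < psi1DivHalfLog 4 := by
  rw [psi1DivHalfLog, psi1, show (4 : ℝ) = 2 ^ 2 by norm_num, log_pow,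
    lt_div_iff₀ (by positivity)]
  linarith [log_two_lt_d9]

theorem psi1_close_to_half_log :
    (∀ x : ℝ, x ∈ Set.Icc (1/2 : ℝ) 2 → x ≠ 1 →
      0.96 < ((x - 1) / (x + 1)) / (Real.log x / 2) ∧
      ((x - 1) / (x + 1)) / (Real.log x / 2) ≤ 1) ∧
    (∀ x : ℝ, x ∈ Set.Icc (1/4 : ℝ) 4 → x ≠ 1 →
      0.86 < ((x - 1) / (x + 1)) / (Real.log x / 2) ∧
      ((x - 1) / (x + 1)) / (Real.log x / 2) ≤ 1) := by
  have bounds {B c : ℝ} (hB : 0 < B) (hc : c < psi1DivHalfLog B) (x : ℝ)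
      (hx : x ∈ Icc B⁻¹ B) (hx1 : x ≠ 1) : c < psi1DivHalfLog x ∧ psi1DivHalfLog x ≤ 1 :=
    have h := psi1DivHalfLog_bounds hB hx hx1
    ⟨hc.trans_le h.1, h.2⟩
  rw [one_div, one_div]
  exact ⟨bounds two_pos lt_psi1DivHalfLog_two, bounds four_pos lt_psi1DivHalfLog_four⟩
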